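/- arXiv:2402.15348 — 2 statements merged into one kernel-verified Lean document; each statement's English description precedes it below -/
import Mathlib

section
/- Let G be a graph, X a set of colors, and c : V(G) → X a coloring. Suppose there exists a 'colorful' solution of size p for Maximum Vertex-Disjoint Shortest Paths, i.e., p pairwise vertex-disjoint shortest terminal paths such that no color appears on two distinct paths. Then for every r ≤ p and for the recurrence f[X, r] = min over Y ⊊ X of (f[X∖Y, r−1] + f[Y, 1]), where f[Y, 1] is the minimum number of edges of a single shortest terminal path whose vertices are all colored with colors from Y (∞ if none exists), f[X, r] equals the minimum total number of edges over all colorful collections of r pairwise vertex-disjoint shortest terminal paths using only colors in X. -/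
/-- The weight of a walk in an edge-weighted graph. -/
noncomputable def walkWeight {V : Type*} {G : SimpleGraph V} (w : Sym2 V → NNReal)
    {a b : V} (p : G.Walk a b) : NNReal := (p.edges.map w).sum

/-- The minimum total number of edges over all colorful collections of `r` pairwise
vertex-disjoint shortest terminal paths using only colors in `Y` (`⊤` if none). -/
noncomputable def bestColorful {V C : Type*} (G : SimpleGraph V) (w : Sym2 V → NNReal)
    (col : V → C) {k : ℕ} (s t : Fin k → V) (Y : Set C) (r : ℕ) : ℕ∞ :=
  sInf { n : ℕ∞ | ∃ (S : Finset (Fin k)) (P : ∀ i, G.Walk (s i) (t i)),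
    S.card = r ∧
    (∀ i ∈ S, (P i).IsPath ∧
      (∀ q : G.Walk (s i) (t i), walkWeight w (P i) ≤ walkWeight w q) ∧
      (∀ v ∈ (P i).support, col v ∈ Y)) ∧
    (∀ i ∈ S, ∀ j ∈ S, i ≠ j → List.Disjoint (P i).support (P j).support) ∧
    (∀ i ∈ S, ∀ j ∈ S, i ≠ j →
      ∀ v ∈ (P i).support, ∀ u ∈ (P j).support, col v ≠ col u) ∧
    n = ∑ i ∈ S, ((P i).length : ℕ∞) }

lemma enat_sInf_mem {S : Set ℕ∞} (h : sInf S ≠ ⊤) : sInf S ∈ S := by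
  have hne : S.Nonempty := by
    by_contra hc
    rw [Set.not_nonempty_iff_eq_empty] at hc
    simp [hc] at h
  exact csInf_mem hne

lemma combine_le {V C : Type*} (G : SimpleGraph V) (w : Sym2 V → NNReal)
    (col : V → C) {k : ℕ} (s t : Fin k → V) (Y Z : Set C) (hZY : Z ⊆ Y) (r : ℕ) :
    bestColorful G w col s t Y (r+1) ≤
      bestColorful G w col s t (Y \ Z) r + bestColorful G w col s t Z 1 := by
  by_cases h1 : bestColorful G w col s t (Y \ Z) r = ⊤
  · simp [h1]
  by_cases h2 : bestColorful G w col s t Z 1 = ⊤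
  · simp [h2]
  obtain ⟨S, P, hcard, hgood, hdisj, hcolf, hval⟩ := enat_sInf_mem h1
  obtain ⟨S', P', hcard', hgood', -, -, hval'⟩ := enat_sInf_mem h2
  obtain ⟨j, rfl⟩ := Finset.card_eq_one.mp hcard'
  have hgq := hgood' j (Finset.mem_singleton_self j)
  set q : G.Walk (s j) (t j) := P' j with hq
  have hjS : j ∉ S := by
    intro hjS
    have h1 : col (s j) ∈ Y \ Z := (hgood j hjS).2.2 _ ((P j).start_mem_support)
    have h2 : col (s j) ∈ Z := hgq.2.2 _ q.start_mem_support
    exact h1.2 h2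
  apply sInf_le
  classical
  refine ⟨insert j S, Function.update P j q, ?_, ?_, ?_, ?_, ?_⟩
  · rw [Finset.card_insert_of_notMem hjS, hcard]
  · intro i hi
    rcases Finset.mem_insert.mp hi with rfl | hiS
    · simpa [Function.update_self] using ⟨hgq.1, hgq.2.1, fun v hv => hZY (hgq.2.2 v hv)⟩
    · have hne : i ≠ j := fun h => hjS (h ▸ hiS)
      have := hgood i hiS
      simpa [Function.update_of_ne hne] using ⟨this.1, this.2.1, fun v hv => (this.2.2 v hv).1⟩
  · intro i hi i' hi' hne v hv hv'
    rcases Finset.mem_insert.mp hi with rfl | hiS <;> rcases Finset.mem_insert.mp hi' with rfl | hi'S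
    · exact hne rfl
    · have hne' : i' ≠ i := fun h => hjS (h ▸ hi'S)
      rw [Function.update_self] at hv
      rw [Function.update_of_ne hne'] at hv'
      exact ((hgood i' hi'S).2.2 v hv').2 (hgq.2.2 v hv)
    · have hne' : i ≠ i' := fun h => hjS (h ▸ hiS)
      rw [Function.update_self] at hv'
      rw [Function.update_of_ne hne'] at hv
      exact ((hgood i hiS).2.2 v hv).2 (hgq.2.2 v hv')
    · have h1 : i ≠ j := fun h => hjS (h ▸ hiS)
      have h2 : i' ≠ j := fun h => hjS (h ▸ hi'S)
      rw [Function.update_of_ne h1] at hv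
      rw [Function.update_of_ne h2] at hv'
      exact hdisj i hiS i' hi'S hne hv hv'
  · intro i hi i' hi' hne v hv u hu
    rcases Finset.mem_insert.mp hi with rfl | hiS <;> rcases Finset.mem_insert.mp hi' with rfl | hi'S
    · exact absurd rfl hne
    · have hne' : i' ≠ i := fun h => hjS (h ▸ hi'S)
      rw [Function.update_self] at hv
      rw [Function.update_of_ne hne'] at hu
      intro h
      exact ((hgood i' hi'S).2.2 u hu).2 (by rw [← h]; exact hgq.2.2 v hv)
    · have hne' : i ≠ i' := fun h => hjS (h ▸ hiS)
      rw [Function.update_self] at hu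
      rw [Function.update_of_ne hne'] at hv
      intro h
      exact ((hgood i hiS).2.2 v hv).2 (by rw [h]; exact hgq.2.2 u hu)
    · have h1 : i ≠ j := fun h => hjS (h ▸ hiS)
      have h2 : i' ≠ j := fun h => hjS (h ▸ hi'S)
      rw [Function.update_of_ne h1] at hv
      rw [Function.update_of_ne h2] at hu
      exact hcolf i hiS i' hi'S hne v hv u hu
  · rw [Finset.sum_insert hjS, Function.update_self]
    have hsum : ∑ i ∈ S, ((Function.update P j q i).length : ℕ∞)
        = ∑ i ∈ S, ((P i).length : ℕ∞) := by
      apply Finset.sum_congr rfl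
      intro i hiS
      rw [Function.update_of_ne (show i ≠ j by rintro rfl; exact hjS hiS)]
    rw [hsum]
    have e1 : bestColorful G w col s t (Y \ Z) r = ∑ i ∈ S, ((P i).length : ℕ∞) := hval
    have e2 : bestColorful G w col s t Z 1 = ∑ i ∈ ({j} : Finset (Fin k)), ((P' i).length : ℕ∞) := hval'
    rw [e1, e2, Finset.sum_singleton]
    exact (add_comm _ _)

lemma split_le {V C : Type*} (G : SimpleGraph V) (w : Sym2 V → NNReal)
    (col : V → C) {k : ℕ} (s t : Fin k → V) (Y : Set C) (r : ℕ) (hr : 1 ≤ r)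
    (n : ℕ∞)
    (hn : ∃ (S : Finset (Fin k)) (P : ∀ i, G.Walk (s i) (t i)),
      S.card = r + 1 ∧
      (∀ i ∈ S, (P i).IsPath ∧
        (∀ q : G.Walk (s i) (t i), walkWeight w (P i) ≤ walkWeight w q) ∧
        (∀ v ∈ (P i).support, col v ∈ Y)) ∧
      (∀ i ∈ S, ∀ j ∈ S, i ≠ j → List.Disjoint (P i).support (P j).support) ∧
      (∀ i ∈ S, ∀ j ∈ S, i ≠ j →
        ∀ v ∈ (P i).support, ∀ u ∈ (P j).support, col v ≠ col u) ∧
      n = ∑ i ∈ S, ((P i).length : ℕ∞)) :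
    ∃ Z : Set C, Z ⊂ Y ∧
      bestColorful G w col s t (Y \ Z) r + bestColorful G w col s t Z 1 ≤ n := by
  classical
  obtain ⟨S, P, hcard, hgood, hdisj, hcolf, hval⟩ := hn
  have hSne : S.Nonempty := Finset.card_pos.mp (by omega)
  obtain ⟨j, hj⟩ := hSne
  have herase : (S.erase j).card = r := by
    rw [Finset.card_erase_of_mem hj, hcard]
    omega
  have hEne : (S.erase j).Nonempty := Finset.card_pos.mp (by omega)
  obtain ⟨i0, hi0⟩ := hEne
  have hi0j : i0 ≠ j := Finset.ne_of_mem_erase hi0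
  have hi0S : i0 ∈ S := Finset.mem_of_mem_erase hi0
  set Z : Set C := col '' {v | v ∈ (P j).support} with hZ
  have hZY : Z ⊆ Y := by
    rintro c ⟨v, hv, rfl⟩
    exact (hgood j hj).2.2 v hv
  have hcZ : col (s i0) ∉ Z := by
    rintro ⟨u, hu, heq⟩
    exact hcolf i0 hi0S j hj hi0j (s i0) ((P i0).start_mem_support) u hu heq.symm
  have hssub : Z ⊂ Y := (Set.ssubset_iff_of_subset hZY).mpr
    ⟨col (s i0), (hgood i0 hi0S).2.2 _ ((P i0).start_mem_support), hcZ⟩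
  have hb1 : bestColorful G w col s t (Y \ Z) r ≤ ∑ i ∈ S.erase j, ((P i).length : ℕ∞) := by
    apply sInf_le
    refine ⟨S.erase j, P, herase, ?_, ?_, ?_, rfl⟩
    · intro i hi
      have hiS := Finset.mem_of_mem_erase hi
      refine ⟨(hgood i hiS).1, (hgood i hiS).2.1, fun v hv => ⟨(hgood i hiS).2.2 v hv, ?_⟩⟩
      rintro ⟨u, hu, heq⟩
      exact hcolf i hiS j hj (Finset.ne_of_mem_erase hi) v hv u hu heq.symm
    · intro i hi i' hi' hne
      exact hdisj i (Finset.mem_of_mem_erase hi) i' (Finset.mem_of_mem_erase hi') hne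
    · intro i hi i' hi' hne
      exact hcolf i (Finset.mem_of_mem_erase hi) i' (Finset.mem_of_mem_erase hi') hne
  have hb2 : bestColorful G w col s t Z 1 ≤ ((P j).length : ℕ∞) := by
    apply sInf_le
    refine ⟨{j}, P, Finset.card_singleton j, ?_, ?_, ?_, (Finset.sum_singleton _ _).symm⟩
    · intro i hi
      rw [Finset.mem_singleton] at hi
      subst hi
      exact ⟨(hgood i hj).1, (hgood i hj).2.1, fun v hv => ⟨v, hv, rfl⟩⟩
    · intro i hi i' hi' hne
      rw [Finset.mem_singleton] at hi hi'
      exact absurd (hi.trans hi'.symm) hne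
    · intro i hi i' hi' hne
      rw [Finset.mem_singleton] at hi hi'
      exact absurd (hi.trans hi'.symm) hne
  refine ⟨Z, hssub, ?_⟩
  calc bestColorful G w col s t (Y \ Z) r + bestColorful G w col s t Z 1
      ≤ (∑ i ∈ S.erase j, ((P i).length : ℕ∞)) + ((P j).length : ℕ∞) :=
        add_le_add hb1 hb2
    _ = ∑ i ∈ S, ((P i).length : ℕ∞) := Finset.sum_erase_add S _ hj
    _ = n := hval.symm

/-- Correctness of the color-coding dynamic program: if a colorful solution of size `p`
exists, then for every `r ≤ p` the function `f` defined by the base case and the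
recurrence `f[X, r] = min_{Y ⊊ X} (f[X∖Y, r−1] + f[Y, 1])` equals the minimum total
number of edges over all colorful collections of `r` pairwise vertex-disjoint shortest
terminal paths using only colors in `X`. -/
theorem stmt8 {V C : Type*} (G : SimpleGraph V) (w : Sym2 V → NNReal)
    (col : V → C) {k : ℕ} (s t : Fin k → V) (p : ℕ)
    (hexists : bestColorful G w col s t Set.univ p ≠ ⊤)
    (f : Set C → ℕ → ℕ∞)
    (hbase : ∀ Y, f Y 1 = bestColorful G w col s t Y 1)
    (hrec : ∀ Y r, 2 ≤ r →
      f Y r = ⨅ (Z : Set C) (_ : Z ⊂ Y), (f (Y \ Z) (r - 1) + f Z 1)) :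
    ∀ Y r, 1 ≤ r → r ≤ p → f Y r = bestColorful G w col s t Y r := by
  have main : ∀ r, 1 ≤ r → ∀ Y, f Y r = bestColorful G w col s t Y r := by
    intro r
    induction r with
    | zero => omega
    | succ m ih =>
      intro _ Y
      rcases Nat.eq_zero_or_pos m with rfl | hm
      · exact hbase Y
      · have hrw := hrec Y (m + 1) (by omega)
        have hsub : m + 1 - 1 = m := rfl
        rw [hsub] at hrw
        have hIH : ∀ Y', f Y' m = bestColorful G w col s t Y' m := ih hm
        rw [hrw]
        have heq : (⨅ (Z : Set C) (_ : Z ⊂ Y), (f (Y \ Z) m + f Z 1))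
            = ⨅ (Z : Set C) (_ : Z ⊂ Y),
                (bestColorful G w col s t (Y \ Z) m + bestColorful G w col s t Z 1) := by
          refine iInf_congr fun Z => iInf_congr fun hZ => ?_
          rw [hIH, hbase]
        rw [heq]
        apply le_antisymm
        · apply le_sInf
          intro n hn
          obtain ⟨Z, hZY, hle⟩ := split_le G w col s t Y m hm n hn
          exact (iInf₂_le_of_le Z hZY hle)
        · exact le_iInf fun Z => le_iInf fun hZ =>
            combine_le G w col s t Y Z hZ.subset m
  intro Y r hr1 _
  exact main r hr1 Y
end

section
/- Greedy achieves a ⌈√ℓ⌉-approximation: suppose at every greedy step either (a) the chosen path has at most ⌈√ℓ⌉ vertices, in which case it intersects at most ⌈√ℓ⌉ paths of OPT, or (b) every remaining path of OPT has at least ⌈√ℓ⌉ edges, in which case at most ⌈√ℓ⌉ paths remain in OPT. Then the greedy solution has size at least |OPT| / ⌈√ℓ⌉. -/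
/-- Greedy achieves a `⌈√ℓ⌉`-approximation: if a sequential process produces `g` items,
each step destroys at most `c = ⌈√ℓ⌉` paths of `OPT`, and every path of `OPT` is
destroyed by some step, then `g ≥ |OPT| / ⌈√ℓ⌉`. -/
theorem stmt18 (ℓ opt g : ℕ) (hℓ : 0 < ℓ) (d : Fin g → ℕ)
    (hstep : ∀ i, d i ≤ ⌈Real.sqrt (ℓ : ℝ)⌉₊)
    (hcover : opt ≤ ∑ i, d i) :
    (opt : ℝ) / (⌈Real.sqrt (ℓ : ℝ)⌉₊ : ℝ) ≤ (g : ℝ) := by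
  set c := ⌈Real.sqrt (ℓ : ℝ)⌉₊ with hc
  have hsqrt : 0 < Real.sqrt (ℓ : ℝ) := Real.sqrt_pos.mpr (by exact_mod_cast hℓ)
  have hcpos : 0 < c := Nat.ceil_pos.mpr hsqrt
  have h1 : opt ≤ g * c := by
    calc opt ≤ ∑ i, d i := hcover
    _ ≤ ∑ _i : Fin g, c := Finset.sum_le_sum (fun i _ => hstep i)
    _ = g * c := by simp [Finset.sum_const, mul_comm]
  rw [div_le_iff₀ (by exact_mod_cast hcpos)]
  exact_mod_cast h1
end
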